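/- Let φ be a 3-CNF formula with variables x_1,…,x_η and clauses c_1,…,c_μ, let M be a positive integer, and let the weighted graph G'_φ with its clustering and source s be the associated CluSPT instance. If φ is not satisfiable, then every clustered spanning tree T of G'_φ rooted at s satisfies cost(T) ≥ η + M + 4. -/

import Mathlib

open SimpleGraph

inductive WVtx (η μ M : ℕ) where
  | s : WVtx η μ M
  | pos : Fin η → WVtx η μ M
  | neg : Fin η → WVtx η μ M
  | cl : Fin μ → Fin 3 → WVtx η μ M
  | r : Fin μ → WVtx η μ M
  | pth : Fin μ → Fin M → WVtx η μ M
  deriving DecidableEq, Fintype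

/-- Base adjacency relation for the CluSPT hardness graph `G'_φ`. -/
def wRel {η μ M : ℕ} (φ : Fin μ → Fin 3 → Fin η × Bool) :
    WVtx η μ M → WVtx η μ M → Prop
  | .s, .pos _ => True
  | .s, .neg _ => True
  | .pos i, .neg i' => i = i'
  | .r j, .cl j' _ => j = j'
  | .r j, .pth j' t => j = j' ∧ (t : ℕ) = 0
  | .pth j t, .pth j' t' => j = j' ∧ (t' : ℕ) = (t : ℕ) + 1
  | .cl j k, .pos i => φ j k = (i, true)
  | .cl j k, .neg i => φ j k = (i, false)
  | _, _ => False

def wGraph {η μ M : ℕ} (φ : Fin μ → Fin 3 → Fin η × Bool) : SimpleGraph (WVtx η μ M) :=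
  SimpleGraph.fromRel (wRel φ)

-- Edge weights: every edge has weight `0` except the edges `(v_i, v̄_i)`,
-- which have weight `1`.
open Classical in
noncomputable def wWt (η μ M : ℕ) : Sym2 (WVtx η μ M) → ℝ :=
  fun e => if ∃ i : Fin η, e = s(WVtx.pos i, WVtx.neg i) then 1 else 0

def wClusters (η μ M : ℕ) : Set (Set (WVtx η μ M)) :=
  {{WVtx.s}} ∪ {S | ∃ i, S = {WVtx.pos i, WVtx.neg i}} ∪
    {S | ∃ j, S = {x | (∃ k, x = WVtx.cl j k) ∨ x = WVtx.r j ∨ ∃ t, x = WVtx.pth j t}}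

def IsCST {V : Type*} (G : SimpleGraph V) (𝒞 : Set (Set V)) (T : SimpleGraph V) : Prop :=
  T ≤ G ∧ T.IsTree ∧ ∀ C ∈ 𝒞, (T.induce C).Connected

/-- The weighted distance between `u` and `v` in `T` with edge weights `w`:
the least total weight of a walk from `u` to `v` (for a tree with nonnegative
weights, this is the total weight of the unique `u`–`v` path). -/
noncomputable def wdist {V : Type*} (T : SimpleGraph V) (w : Sym2 V → ℝ) (u v : V) : ℝ :=
  sInf {x | ∃ p : T.Walk u v, x = (p.edges.map w).sum}

/-!
Each variable cluster `{v_i, v̄_i}` forces the weight-one edge `e_i = v_i v̄_i` into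
the tree `T`, and since `T` is a tree, `e_i` is a bridge: one endpoint lies on the side of `s`
and the other one is at distance at least `1` from `s`. Declare `x_i` true iff `v_i` lies on the
side of `s`; then a literal is false exactly when its vertex lies beyond its bridge. As `φ` is
unsatisfiable, some clause `c_j` has three false literals. The only edges of `G'_φ` entering the
cluster of `c_j` come from its literal vertices, so every walk from `s` into that cluster crosses
one of the three bridges, and all `M + 4` vertices of the cluster are at distance at least `1`.
Together with the `η` far endpoints of the bridges this gives `η + M + 4` vertices at distance
at least `1`.
-/

namespace SimpleGraph

variable {V : Type*}

lemma adj_of_induce_pair_connected {G : SimpleGraph V} {a b : V} (hab : a ≠ b)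
    (h : (G.induce {a, b}).Connected) : G.Adj a b := by
  obtain ⟨p⟩ := h.preconnected ⟨a, by simp⟩ ⟨b, by simp⟩
  have hp : ¬ p.Nil := fun hnil => hab (congrArg Subtype.val hnil.eq)
  have hsnd : G.Adj a p.snd := p.adj_snd hp
  have hmem := p.snd.2
  simp only [Set.mem_insert_iff, Set.mem_singleton_iff] at hmem
  rcases hmem with h | h
  · exact (hsnd.ne h.symm).elim
  · exact h ▸ hsnd

lemma IsAcyclic.not_reachable_deleteEdges_of_reachable {T : SimpleGraph V} (hT : T.IsAcyclic)
    {u a b : V} (hab : T.Adj a b) (ha : (T.deleteEdges {s(a, b)}).Reachable u a) :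
    ¬ (T.deleteEdges {s(a, b)}).Reachable u b := fun hb =>
  isAcyclic_iff_forall_adj_isBridge.mp hT hab (ha.symm.trans hb)

lemma not_reachable_of_forall_adj_mem {G : SimpleGraph V} {S : Set V} {u v : V} (hu : u ∉ S)
    (hv : v ∈ S) (hS : ∀ x y, G.Adj x y → x ∉ S → y ∈ S → ¬ G.Reachable u x) :
    ¬ G.Reachable u v := by
  classical
  rintro ⟨p⟩
  obtain ⟨d, hd, hx, hy⟩ := p.exists_boundary_dart Sᶜ hu (by simpa using hv)
  exact hS _ _ d.adj hx (by simpa using hy)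
    (p.takeUntil _ (p.dart_fst_mem_support_of_mem_darts hd)).reachable

end SimpleGraph

section WalkDistance

variable {V : Type*} {T : SimpleGraph V} {w : Sym2 V → ℝ}

lemma wdist_nonneg (hw : 0 ≤ w) (u v : V) : 0 ≤ wdist T w u v :=
  Real.sInf_nonneg <| by
    rintro x ⟨p, rfl⟩
    exact List.sum_nonneg <| by simpa using fun e _ => hw e

lemma one_le_wdist_of_not_reachable_deleteEdges (hw : 0 ≤ w) {F : Set (Sym2 V)}
    (hF : ∀ e ∈ F, 1 ≤ w e) {u v : V} (huv : T.Reachable u v)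
    (hsep : ¬ (T.deleteEdges F).Reachable u v) : 1 ≤ wdist T w u v := by
  obtain ⟨p⟩ := huv
  refine le_csInf ⟨_, p, rfl⟩ ?_
  rintro x ⟨q, rfl⟩
  obtain ⟨e, heF, heq⟩ := q.exists_mem_edges_of_not_reachable_deleteEdges hsep
  calc 1 ≤ w e := hF e heF
    _ ≤ (q.edges.map w).sum :=
      List.single_le_sum (by simpa using fun e _ => hw e) _ (List.mem_map_of_mem heq)

end WalkDistance

lemma Fintype.card_le_sum_of_injective {ι V : Type*} [Fintype ι] [Fintype V] {f : V → ℝ}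
    (hf : 0 ≤ f) {g : ι → V} (hg : g.Injective) (h : ∀ x, 1 ≤ f (g x)) :
    (Fintype.card ι : ℝ) ≤ ∑ v, f v :=
  calc (Fintype.card ι : ℝ) = ∑ _x : ι, (1 : ℝ) := by simp
    _ ≤ ∑ x, f (g x) := Finset.sum_le_sum fun x _ => h x
    _ = ∑ v ∈ Finset.univ.map ⟨g, hg⟩, f v := by rw [Finset.sum_map]; rfl
    _ ≤ ∑ v, f v := Finset.sum_le_univ_sum_of_nonneg hf

section Reduction

variable {η μ M : ℕ}

/-- The literal `x_i` is encoded as `(i, true)` and `¬x_i` as `(i, false)`. -/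
def litVtx (l : Fin η × Bool) : WVtx η μ M := if l.2 then .pos l.1 else .neg l.1

def varEdge (i : Fin η) : Sym2 (WVtx η μ M) := s(.pos i, .neg i)

def clauseVtx (j : Fin μ) : Fin 3 ⊕ Unit ⊕ Fin M → WVtx η μ M :=
  Sum.elim (.cl j) (Sum.elim (fun _ => .r j) (.pth j))

lemma wWt_nonneg : 0 ≤ wWt η μ M := fun e => by
  unfold wWt; split <;> norm_num

lemma wWt_varEdge (i : Fin η) : wWt η μ M (varEdge i) = 1 := if_pos ⟨i, rfl⟩

lemma litVtx_ne_clauseVtx (l : Fin η × Bool) (j : Fin μ) (x : Fin 3 ⊕ Unit ⊕ Fin M) :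
    litVtx l ≠ clauseVtx j x := by
  unfold litVtx clauseVtx; split <;> rcases x with _ | _ | _ <;> simp

lemma clauseVtx_injective (j : Fin μ) : (clauseVtx j : _ → WVtx η μ M).Injective := by
  rintro (k | _ | t) (k' | _ | t') h <;> simp_all [clauseVtx]

lemma fst_eq_of_litVtx_eq {l l' : Fin η × Bool} (h : (litVtx l : WVtx η μ M) = litVtx l') :
    l.1 = l'.1 := by
  unfold litVtx at h; split at h <;> split at h <;> simp_all

lemma exists_eq_litVtx_of_adj_clauseVtx (φ : Fin μ → Fin 3 → Fin η × Bool) {j : Fin μ}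
    {v : WVtx η μ M} {x : Fin 3 ⊕ Unit ⊕ Fin M} (hadj : (wGraph φ).Adj v (clauseVtx j x))
    (hv : v ∉ Set.range (clauseVtx j)) : ∃ k, v = litVtx (φ j k) := by
  rw [wGraph, fromRel_adj] at hadj
  obtain ⟨-, h | h⟩ := hadj <;> rcases x with k | _ | t <;> cases v <;>
    simp_all [clauseVtx, wRel, litVtx]
  all_goals exact ⟨k, by simp [h]⟩

variable {T : SimpleGraph (WVtx η μ M)}

def NearSide (T : SimpleGraph (WVtx η μ M)) (i : Fin η) (v : WVtx η μ M) : Prop :=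
  (T.deleteEdges {varEdge i}).Reachable .s v

open Classical in
noncomputable def sideAssignment (T : SimpleGraph (WVtx η μ M)) (i : Fin η) : Bool :=
  decide (NearSide T i (.pos i))

lemma not_nearSide_litVtx (hT : T.IsAcyclic) {i : Fin η} (hi : T.Adj (.pos i) (.neg i))
    {b : Bool} (hb : sideAssignment T i ≠ b) : ¬ NearSide T i (litVtx (i, b)) := by
  cases b
  · have hpos : NearSide T i (.pos i) := by simpa [sideAssignment] using hb
    exact hT.not_reachable_deleteEdges_of_reachable hi hpos
  · simpa [sideAssignment, litVtx] using hb

lemma not_reachable_clauseVtx (φ : Fin μ → Fin 3 → Fin η × Bool) (hTG : T ≤ wGraph φ)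
    {j : Fin μ} (hfalse : ∀ k, ¬ NearSide T (φ j k).1 (litVtx (φ j k)))
    (x : Fin 3 ⊕ Unit ⊕ Fin M) :
    ¬ (T.deleteEdges (Set.range fun k => varEdge (φ j k).1)).Reachable .s (clauseVtx j x) := by
  refine not_reachable_of_forall_adj_mem (S := Set.range (clauseVtx j)) ?_ ⟨x, rfl⟩ ?_
  · rintro ⟨k | _ | t, h⟩ <;> simp [clauseVtx] at h
  rintro v _ hadj hv ⟨y, rfl⟩ hreach
  obtain ⟨k, rfl⟩ := exists_eq_litVtx_of_adj_clauseVtx φ (hTG (deleteEdges_le _ hadj)) hv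
  exact hfalse k (hreach.mono (deleteEdges_anti (by simp)))

lemma one_le_wdist_of_not_reachable_deleteEdges_varEdge (hT : T.Connected)
    {F : Set (Sym2 (WVtx η μ M))} (hF : F ⊆ Set.range varEdge) {v : WVtx η μ M}
    (hv : ¬ (T.deleteEdges F).Reachable .s v) : 1 ≤ wdist T (wWt η μ M) .s v :=
  one_le_wdist_of_not_reachable_deleteEdges wWt_nonneg
    (fun _ he => by obtain ⟨i, rfl⟩ := hF he; exact (wWt_varEdge i).ge) (hT.preconnected _ _) hv

end Reduction

theorem stmt13_general (η μ M : ℕ) (φ : Fin μ → Fin 3 → Fin η × Bool)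
    (hunsat : ¬ ∃ a : Fin η → Bool, ∀ j, ∃ k, a (φ j k).1 = (φ j k).2) :
    ∀ T : SimpleGraph (WVtx η μ M), IsCST (wGraph φ) (wClusters η μ M) T →
      (η : ℝ) + M + 4 ≤ ∑ v, wdist T (wWt η μ M) WVtx.s v := by
  rintro T ⟨hTG, hT, hclusters⟩
  have hadj : ∀ i, T.Adj (.pos i) (.neg i) := fun i =>
    adj_of_induce_pair_connected (by simp) (hclusters _ (Or.inl (Or.inr ⟨i, rfl⟩)))
  set a := sideAssignment T
  obtain ⟨j, hj⟩ : ∃ j, ∀ k, a (φ j k).1 ≠ (φ j k).2 := by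
    by_contra! h
    exact hunsat ⟨a, h⟩
  let heavy : Fin η ⊕ (Fin 3 ⊕ Unit ⊕ Fin M) → WVtx η μ M :=
    Sum.elim (fun i => litVtx (i, !a i)) (clauseVtx j)
  have heavy_injective : heavy.Injective :=
    .sumElim (fun _ _ h => fst_eq_of_litVtx_eq h) (clauseVtx_injective j)
      (fun _ _ => litVtx_ne_clauseVtx _ _ _)
  have one_le_wdist_heavy : ∀ x, 1 ≤ wdist T (wWt η μ M) .s (heavy x) := by
    rintro (i | x)
    · exact one_le_wdist_of_not_reachable_deleteEdges_varEdge hT.connected (by simp)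
        (not_nearSide_litVtx hT.isAcyclic (hadj i) (Bool.self_ne_not _))
    · exact one_le_wdist_of_not_reachable_deleteEdges_varEdge hT.connected
        (Set.range_subset_iff.mpr fun k => ⟨_, rfl⟩) (not_reachable_clauseVtx φ hTG
          (fun k => not_nearSide_litVtx hT.isAcyclic (hadj _) (hj k)) x)
  calc (η : ℝ) + M + 4 = Fintype.card (Fin η ⊕ (Fin 3 ⊕ Unit ⊕ Fin M)) := by
        simp only [Fintype.card_sum, Fintype.card_fin, Fintype.card_unit]; push_cast; ring
    _ ≤ _ := Fintype.card_le_sum_of_injective (wdist_nonneg wWt_nonneg .s) heavy_injective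
        one_le_wdist_heavy

theorem stmt13 (η μ M : ℕ) (hM : 0 < M) (φ : Fin μ → Fin 3 → Fin η × Bool)
    (hunsat : ¬ ∃ a : Fin η → Bool, ∀ j, ∃ k, a (φ j k).1 = (φ j k).2) :
    ∀ T : SimpleGraph (WVtx η μ M), IsCST (wGraph φ) (wClusters η μ M) T →
      (η : ℝ) + M + 4 ≤ ∑ v, wdist T (wWt η μ M) WVtx.s v :=
  stmt13_general η μ M φ hunsat
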